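/- arXiv:1901.01469 — 2 statements merged into one kernel-verified Lean document; each statement's English description precedes it below -/
import Mathlib

section
/- Let (x̄,λ̄) be a solution of the variational system Ψ(x,λ) = 0, λ ∈ ∂θ(Φ(x)). Set z̄ := Φ(x̄), let K := T_Y(λ̄) ∩ {z̄ − Bλ̄}^⊥ be the critical cone of Y at λ̄ for z̄ − Bλ̄, and let K* := {v ∈ ℝ^m : ⟨v,w⟩ ≤ 0 for all w ∈ K} be its polar cone. Then λ̄ is a critical Lagrange multiplier corresponding to x̄ if and only if the system ∇_xΨ(x̄,λ̄)ξ + ∇Φ(x̄)*η = 0, ⟨∇Φ(x̄)ξ − Bη, η⟩ = 0, ∇Φ(x̄)ξ − Bη ∈ K*, η ∈ K admits a solution (ξ,η) ∈ ℝ^n × ℝ^m with ξ ≠ 0; accordingly, λ̄ is noncritical if and only if every solution (ξ,η) of this system has ξ = 0. -/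
open Filter Topology Metric Set Pointwise
open scoped RealInnerProductSpace

noncomputable section

/-- Euclidean space ℝ^k. -/
abbrev Evec (k : ℕ) : Type := EuclideanSpace ℝ (Fin k)

/-- The Bouligand tangent cone to `Ω` at `z`: limits of `α_k (z_k - z)` with
`z_k → z` in `Ω` and `α_k ≥ 0`. -/
def bTangentCone {F : Type*} [NormedAddCommGroup F] [NormedSpace ℝ F]
    (Ω : Set F) (z : F) : Set F :=
  {w | ∃ (zs : ℕ → F) (a : ℕ → ℝ), (∀ k, zs k ∈ Ω) ∧ (∀ k, 0 ≤ a k) ∧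
    Tendsto zs atTop (𝓝 z) ∧ Tendsto (fun k => a k • (zs k - z)) atTop (𝓝 w)}

/-- Graph of a set-valued mapping. -/
def svGraph {A B : Type*} (F : A → Set B) : Set (A × B) := {p | p.2 ∈ F p.1}

/-- Graphical derivative of a set-valued mapping at `(z, w)` in direction `u`. -/
def gDeriv {A B : Type*} [NormedAddCommGroup A] [NormedSpace ℝ A]
    [NormedAddCommGroup B] [NormedSpace ℝ B]
    (F : A → Set B) (z : A) (w : B) (u : A) : Set B :=
  {v | (u, v) ∈ bTangentCone (svGraph F) (z, w)}

/-- A convex polyhedral set: a finite intersection of closed half-spaces. -/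
def IsPolyhedral {k : ℕ} (Y : Set (Evec k)) : Prop :=
  ∃ (p : ℕ) (b : Fin p → Evec k) (c : Fin p → ℝ), Y = {y | ∀ i, ⟪b i, y⟫ ≤ c i}

/-- The piecewise linear-quadratic penalty θ_{Y,B}. -/
def thetaY {k : ℕ} (Y : Set (Evec k)) (B : Evec k →L[ℝ] Evec k) (u : Evec k) : EReal :=
  ⨆ y ∈ Y, ((⟪y, u⟫ - (1 / 2) * ⟪y, B y⟫ : ℝ) : EReal)

/-- Subdifferential of convex analysis of an extended-real-valued function. -/
def subdiff {k : ℕ} (θ : Evec k → EReal) (z : Evec k) : Set (Evec k) :=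
  {v | ∀ u, θ z + ((⟪v, u - z⟫ : ℝ) : EReal) ≤ θ u}

/-- Polar cone. -/
def polarCone {k : ℕ} (K : Set (Evec k)) : Set (Evec k) :=
  {v | ∀ w ∈ K, ⟪v, w⟫ ≤ 0}

/-- Normal cone of convex analysis. -/
def convNormalCone {k : ℕ} (Ω : Set (Evec k)) (z : Evec k) : Set (Evec k) :=
  {v | ∀ w ∈ Ω, ⟪v, w - z⟫ ≤ 0}

/-- The critical cone K = T_Y(lmo) ∩ {zo - Blmo}^⊥. -/
def critCone {k : ℕ} (Y : Set (Evec k)) (B : Evec k →L[ℝ] Evec k)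
    (zo lmo : Evec k) : Set (Evec k) :=
  bTangentCone Y lmo ∩ {w | ⟪zo - B lmo, w⟫ = 0}

/-- Calmness of a set-valued mapping at a graph point. -/
def Calm {A B : Type*} [NormedAddCommGroup A] [NormedAddCommGroup B]
    (F : A → Set B) (zo : A) (wo : B) : Prop :=
  ∃ ℓ : ℝ, 0 ≤ ℓ ∧ ∃ U ∈ 𝓝 zo, ∃ V ∈ 𝓝 wo,
    ∀ z ∈ U, ∀ w ∈ F z ∩ V, ∃ w' ∈ F zo, ‖w - w'‖ ≤ ℓ * ‖z - zo‖

/-- Isolated calmness of a set-valued mapping at a graph point. -/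
def IsolCalm {A B : Type*} [NormedAddCommGroup A] [NormedAddCommGroup B]
    (F : A → Set B) (zo : A) (wo : B) : Prop :=
  ∃ ℓ : ℝ, 0 ≤ ℓ ∧ ∃ U ∈ 𝓝 zo, ∃ V ∈ 𝓝 wo,
    ∀ z ∈ U, ∀ w ∈ F z ∩ V, ‖w - wo‖ ≤ ℓ * ‖z - zo‖

/-- Robust isolated calmness of a set-valued mapping at a graph point. -/
def RobIsolCalm {A B : Type*} [NormedAddCommGroup A] [NormedAddCommGroup B]
    (F : A → Set B) (zo : A) (wo : B) : Prop :=
  ∃ ℓ : ℝ, 0 ≤ ℓ ∧ ∃ U ∈ 𝓝 zo, ∃ V ∈ 𝓝 wo,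
    (∀ z ∈ U, ∀ w ∈ F z ∩ V, ‖w - wo‖ ≤ ℓ * ‖z - zo‖) ∧
    ∀ z ∈ U, (F z ∩ V).Nonempty

/-- Lipschitz-like (Aubin) property of a set-valued mapping around a graph point. -/
def LipLike {A B : Type*} [NormedAddCommGroup A] [NormedAddCommGroup B]
    (F : A → Set B) (zo : A) (wo : B) : Prop :=
  ∃ ℓ : ℝ, 0 ≤ ℓ ∧ ∃ U ∈ 𝓝 zo, ∃ V ∈ 𝓝 wo,
    ∀ z ∈ U, ∀ z' ∈ U, ∀ w ∈ F z' ∩ V, ∃ w' ∈ F z, ‖w - w'‖ ≤ ℓ * ‖z' - z‖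

/-! ### The general variational system -/

/-- Ψ(x,λ) = f(x) + ∇Φ(x)*λ. -/
def Psi {n m : ℕ} (f : Evec n → Evec n) (Φ : Evec n → Evec m)
    (x : Evec n) (lam : Evec m) : Evec n :=
  f x + ContinuousLinearMap.adjoint (fderiv ℝ Φ x) lam

/-- Lagrange multipliers Λ(xo) of the variational system. -/
def LagMult {n m : ℕ} (Y : Set (Evec m)) (B : Evec m →L[ℝ] Evec m)
    (f : Evec n → Evec n) (Φ : Evec n → Evec m) (xo : Evec n) : Set (Evec m) :=
  {lam | Psi f Φ xo lam = 0 ∧ lam ∈ subdiff (thetaY Y B) (Φ xo)}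

/-- Solution map of the canonically perturbed variational system. -/
def SolMap {n m : ℕ} (Y : Set (Evec m)) (B : Evec m →L[ℝ] Evec m)
    (f : Evec n → Evec n) (Φ : Evec n → Evec m) :
    Evec n × Evec m → Set (Evec n × Evec m) :=
  fun p => {q | Psi f Φ q.1 q.2 = p.1 ∧ q.2 ∈ subdiff (thetaY Y B) (Φ q.1 + p.2)}

/-- Multiplier map associated with xo. -/
def MultMap {n m : ℕ} (Y : Set (Evec m)) (B : Evec m →L[ℝ] Evec m)
    (f : Evec n → Evec n) (Φ : Evec n → Evec m) (xo : Evec n) :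
    Evec n × Evec m → Set (Evec m) :=
  fun p => {lam | Psi f Φ xo lam = p.1 ∧ lam ∈ subdiff (thetaY Y B) (Φ xo + p.2)}

/-- lmo is a critical Lagrange multiplier for the variational system. -/
def IsCriticalMult {n m : ℕ} (Y : Set (Evec m)) (B : Evec m →L[ℝ] Evec m)
    (f : Evec n → Evec n) (Φ : Evec n → Evec m) (xo : Evec n) (lmo : Evec m) : Prop :=
  ∃ ξ : Evec n, ξ ≠ 0 ∧
    ∃ η ∈ gDeriv (subdiff (thetaY Y B)) (Φ xo) lmo (fderiv ℝ Φ xo ξ),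
      fderiv ℝ (fun x => Psi f Φ x lmo) xo ξ +
        ContinuousLinearMap.adjoint (fderiv ℝ Φ xo) η = 0

/-- lmo is a noncritical Lagrange multiplier for the variational system. -/
def IsNoncriticalMult {n m : ℕ} (Y : Set (Evec m)) (B : Evec m →L[ℝ] Evec m)
    (f : Evec n → Evec n) (Φ : Evec n → Evec m) (xo : Evec n) (lmo : Evec m) : Prop :=
  ∀ ξ : Evec n, ∀ η ∈ gDeriv (subdiff (thetaY Y B)) (Φ xo) lmo (fderiv ℝ Φ xo ξ),
    fderiv ℝ (fun x => Psi f Φ x lmo) xo ξ +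
      ContinuousLinearMap.adjoint (fderiv ℝ Φ xo) η = 0 → ξ = 0

/-- `u` is the proximal point of `θ` at `z`. -/
def IsProxPt {k : ℕ} (θ : Evec k → EReal) (z u : Evec k) : Prop :=
  ∀ w, θ u + ((1 / 2 * ‖z - u‖ ^ 2 : ℝ) : EReal) ≤ θ w + ((1 / 2 * ‖z - w‖ ^ 2 : ℝ) : EReal)

/-! ### ENLP -/

/-- The Lagrangian of the ENLP. -/
def Lag {n m : ℕ} (B : Evec m →L[ℝ] Evec m) (φ₀ : Evec n → ℝ) (Φ : Evec n → Evec m)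
    (x : Evec n) (lam : Evec m) : ℝ :=
  φ₀ x + ⟪Φ x, lam⟫ - (1 / 2) * ⟪lam, B lam⟫

/-- The essential objective φ = φ₀ + θ∘Φ of the ENLP. -/
def enlpPhi {n m : ℕ} (Y : Set (Evec m)) (B : Evec m →L[ℝ] Evec m)
    (φ₀ : Evec n → ℝ) (Φ : Evec n → Evec m) (x : Evec n) : EReal :=
  ((φ₀ x : ℝ) : EReal) + thetaY Y B (Φ x)

/-- Lagrange multipliers of the ENLP KKT system. -/
def LagMultCom {n m : ℕ} (Y : Set (Evec m)) (B : Evec m →L[ℝ] Evec m)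
    (φ₀ : Evec n → ℝ) (Φ : Evec n → Evec m) (xo : Evec n) : Set (Evec m) :=
  {lam | gradient (fun x => Lag B φ₀ Φ x lam) xo = 0 ∧
    lam ∈ subdiff (thetaY Y B) (Φ xo)}

/-- Solution map of the canonically perturbed KKT system of the ENLP. -/
def SKKT {n m : ℕ} (Y : Set (Evec m)) (B : Evec m →L[ℝ] Evec m)
    (φ₀ : Evec n → ℝ) (Φ : Evec n → Evec m) :
    Evec n × Evec m → Set (Evec n × Evec m) :=
  fun p => {q | gradient (fun x => Lag B φ₀ Φ x q.2) q.1 = p.1 ∧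
    q.2 ∈ subdiff (thetaY Y B) (Φ q.1 + p.2)}

/-- The Hessian ∇²_{xx}L(xo,lmo) as a continuous linear map. -/
def hessL {n m : ℕ} (B : Evec m →L[ℝ] Evec m) (φ₀ : Evec n → ℝ) (Φ : Evec n → Evec m)
    (xo : Evec n) (lmo : Evec m) : Evec n →L[ℝ] Evec n :=
  fderiv ℝ (fun x => gradient (fun x' => Lag B φ₀ Φ x' lmo) x) xo

/-- lmo is a noncritical multiplier of the KKT system of the ENLP. -/
def IsNoncriticalENLP {n m : ℕ} (Y : Set (Evec m)) (B : Evec m →L[ℝ] Evec m)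
    (φ₀ : Evec n → ℝ) (Φ : Evec n → Evec m) (xo : Evec n) (lmo : Evec m) : Prop :=
  ∀ ξ : Evec n, ∀ η ∈ gDeriv (subdiff (thetaY Y B)) (Φ xo) lmo (fderiv ℝ Φ xo ξ),
    hessL B φ₀ Φ xo lmo ξ + ContinuousLinearMap.adjoint (fderiv ℝ Φ xo) η = 0 → ξ = 0

/-- The second-order sufficient condition for the ENLP at (xo,lmo). -/
def SOSC {n m : ℕ} (Y : Set (Evec m)) (B : Evec m →L[ℝ] Evec m)
    (φ₀ : Evec n → ℝ) (Φ : Evec n → Evec m) (xo : Evec n) (lmo : Evec m) : Prop :=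
  ∀ w : Evec n, w ≠ 0 →
    fderiv ℝ Φ xo w ∈ polarCone (critCone Y B (Φ xo) lmo) + Set.range (⇑B) →
    0 < ((⟪hessL B φ₀ Φ xo lmo w, w⟫ : ℝ) : EReal) +
      2 * thetaY (critCone Y B (Φ xo) lmo) B (fderiv ℝ Φ xo w)

/-- xo is a local optimal solution of the ENLP. -/
def IsLocalOptENLP {n m : ℕ} (Y : Set (Evec m)) (B : Evec m →L[ℝ] Evec m)
    (φ₀ : Evec n → ℝ) (Φ : Evec n → Evec m) (xo : Evec n) : Prop :=
  ∃ ε > (0 : ℝ), ∀ x ∈ Metric.closedBall xo ε,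
    enlpPhi Y B φ₀ Φ xo ≤ enlpPhi Y B φ₀ Φ x

/-- The second subderivative d²φ(xo,vo)(wo). -/
def secondSubderiv {k : ℕ} (φ : Evec k → EReal) (xo vo wo : Evec k) : EReal :=
  Filter.liminf
    (fun p : ℝ × Evec k =>
      ((2 / p.1 ^ 2 : ℝ) : EReal) *
        (φ (xo + p.1 • p.2) - φ xo - ((p.1 * ⟪vo, p.2⟫ : ℝ) : EReal)))
    ((𝓝[>] (0 : ℝ)) ×ˢ 𝓝 wo)

/-- The perturbed objective of the ENLP. -/
def pObj {n m : ℕ} (Y : Set (Evec m)) (B : Evec m →L[ℝ] Evec m)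
    (φ₀ : Evec n → ℝ) (Φ : Evec n → Evec m) (p : Evec n × Evec m) (x : Evec n) : EReal :=
  ((φ₀ x - ⟪p.1, x⟫ : ℝ) : EReal) + thetaY Y B (Φ x + p.2)

/-- xo is a fully stable local optimal solution of the ENLP. -/
def FullyStable {n m : ℕ} (Y : Set (Evec m)) (B : Evec m →L[ℝ] Evec m)
    (φ₀ : Evec n → ℝ) (Φ : Evec n → Evec m) (xo : Evec n) : Prop :=
  ∃ γ > (0 : ℝ), ∃ U ∈ 𝓝 (0 : Evec n), ∃ W ∈ 𝓝 (0 : Evec m),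
    ∃ (g : Evec n × Evec m → Evec n) (mg : Evec n × Evec m → ℝ) (ℓ : ℝ), 0 ≤ ℓ ∧
      g (0, 0) = xo ∧
      (∀ p ∈ U ×ˢ W,
        {x : Evec n | ‖x - xo‖ ≤ γ ∧ ∀ x', ‖x' - xo‖ ≤ γ →
          pObj Y B φ₀ Φ p x ≤ pObj Y B φ₀ Φ p x'} = {g p}) ∧
      (∀ p ∈ U ×ˢ W, ∀ q ∈ U ×ˢ W, ‖g p - g q‖ ≤ ℓ * ‖p - q‖) ∧
      (∀ p ∈ U ×ˢ W,
        sInf (pObj Y B φ₀ Φ p '' {x | ‖x - xo‖ ≤ γ}) = ((mg p : ℝ) : EReal)) ∧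
      (∀ p ∈ U ×ˢ W, ∀ q ∈ U ×ˢ W, |mg p - mg q| ≤ ℓ * ‖p - q‖)

/-! ### Normal cones and coderivatives on products -/

/-- Regular (Fréchet) normal cone to a subset of ℝ^a × ℝ^b. -/
def regNormalCone2 {a b : ℕ} (Ω : Set (Evec a × Evec b)) (z : Evec a × Evec b) :
    Set (Evec a × Evec b) :=
  {v | ∀ ε > (0 : ℝ), ∃ δ > (0 : ℝ), ∀ w ∈ Ω, ‖w - z‖ < δ →
    ⟪v.1, w.1 - z.1⟫ + ⟪v.2, w.2 - z.2⟫ ≤ ε * ‖w - z‖}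

/-- Limiting (Mordukhovich) normal cone to a subset of ℝ^a × ℝ^b. -/
def limNormalCone2 {a b : ℕ} (Ω : Set (Evec a × Evec b)) (z : Evec a × Evec b) :
    Set (Evec a × Evec b) :=
  {v | ∃ (zs vs : ℕ → Evec a × Evec b), (∀ k, zs k ∈ Ω) ∧
    (∀ k, vs k ∈ regNormalCone2 Ω (zs k)) ∧
    Tendsto zs atTop (𝓝 z) ∧ Tendsto vs atTop (𝓝 v)}

/-- Coderivative of a set-valued mapping between Euclidean spaces. -/
def coDeriv {a b : ℕ} (F : Evec a → Set (Evec b)) (z : Evec a) (w : Evec b)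
    (v : Evec b) : Set (Evec a) :=
  {u | (u, -v) ∈ limNormalCone2 (svGraph F) (z, w)}

end

/-!
Since `∂θ(z) = {λ ∈ Y | z - Bλ ∈ N_Y(λ)}`, the linear change of coordinates
`(z, λ) ↦ (λ, z - Bλ)` carries the graph of `∂θ` onto the graph of the normal cone map `N_Y`,
so the graphical derivative of `∂θ` is read off the tangent cone to `gph N_Y`. For polyhedral `Y`
that tangent cone at `(λ, v)` is `{(η, w) | η ∈ K, w ∈ K°, ⟪w, η⟫ = 0}` with
`K = T_Y(λ) ∩ v^⊥`: necessity comes from passing to the limit in the normal cone inequalities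
along the defining sequences; sufficiency holds because tangent directions to a polyhedron are
feasible directions and, by Farkas' lemma, `K° = N_Y(λ) - ℝ₊ v`, so that `(λ + tη, v + tw)` stays
in the graph for all small `t > 0`. Criticality is then its definition with `D(∂θ)` replaced by
this description.
-/

section TangentCone

variable {F G : Type*} [NormedAddCommGroup F] [NormedSpace ℝ F]
  [NormedAddCommGroup G] [NormedSpace ℝ G]

lemma mem_bTangentCone_of_eventually {Ω : Set F} {z d : F}
    (h : ∀ᶠ t in 𝓝[>] (0 : ℝ), z + t • d ∈ Ω) : d ∈ bTangentCone Ω z := by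
  obtain ⟨ε, hε : 0 < ε, hIoo⟩ := mem_nhdsGT_iff_exists_Ioo_subset.1 h
  have ht : ∀ k : ℕ, ε / (k + 2) ∈ Ioo 0 ε := fun k =>
    ⟨by positivity, div_lt_self hε (by linarith [k.cast_nonneg (α := ℝ)])⟩
  have hlim : Tendsto (fun k : ℕ => ε / ((k : ℝ) + 2)) atTop (𝓝 0) :=
    tendsto_const_nhds.div_atTop (tendsto_atTop_add_const_right _ 2 tendsto_natCast_atTop_atTop)
  refine ⟨fun k => z + (ε / (k + 2)) • d, fun k => (k + 2) / ε, fun k => hIoo (ht k),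
    fun k => by positivity, ?_, ?_⟩
  · simpa using (hlim.smul_const d).const_add z
  · refine tendsto_const_nhds.congr fun k => ?_
    rw [add_sub_cancel_left, smul_smul, div_mul_div_comm, mul_comm, div_self (by positivity),
      one_smul]

lemma map_mem_bTangentCone (f : F →L[ℝ] G) {Ω : Set F} {Ω' : Set G} (hf : MapsTo f Ω Ω')
    {z w : F} (hw : w ∈ bTangentCone Ω z) : f w ∈ bTangentCone Ω' (f z) := by
  obtain ⟨zs, a, hzs, ha, hlim, hdir⟩ := hw
  refine ⟨fun k => f (zs k), a, fun k => hf (hzs k), ha, (f.continuous.tendsto z).comp hlim, ?_⟩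
  convert (f.continuous.tendsto w).comp hdir using 2 with k
  simp only [Function.comp_apply, map_smul, map_sub]

end TangentCone

section Polyhedron

variable {E : Type*} [NormedAddCommGroup E] [InnerProductSpace ℝ E] {p : ℕ} {b : Fin p → E}
  {c : Fin p → ℝ} {l d : E}

lemma inner_nonpos_of_mem_bTangentCone_polyhedron
    (hd : d ∈ bTangentCone {y | ∀ i, ⟪b i, y⟫ ≤ c i} l) {i : Fin p} (hi : ⟪b i, l⟫ = c i) :
    ⟪b i, d⟫ ≤ 0 := by
  obtain ⟨ys, a, hys, ha, -, hdir⟩ := hd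
  refine le_of_tendsto (tendsto_const_nhds.inner hdir) (Eventually.of_forall fun k => ?_)
  rw [real_inner_smul_right, inner_sub_right, hi]
  exact mul_nonpos_of_nonneg_of_nonpos (ha k) (sub_nonpos.2 (hys k i))

lemma eventually_add_smul_mem_polyhedron (hl : ∀ i, ⟪b i, l⟫ ≤ c i)
    (hd : ∀ i, ⟪b i, l⟫ = c i → ⟪b i, d⟫ ≤ 0) :
    ∀ᶠ t in 𝓝[>] (0 : ℝ), l + t • d ∈ {y | ∀ i, ⟪b i, y⟫ ≤ c i} := by
  refine eventually_all.2 fun i => ?_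
  simp only [inner_add_right, real_inner_smul_right]
  rcases (hl i).eq_or_lt with hi | hi
  · filter_upwards [self_mem_nhdsWithin] with t ht
    nlinarith [hd i hi, mem_Ioi.1 ht]
  · have hcont : Tendsto (fun t : ℝ => ⟪b i, l⟫ + t * ⟪b i, d⟫) (𝓝 0) (𝓝 ⟪b i, l⟫) := by
      simpa using ((tendsto_id (x := 𝓝 (0 : ℝ))).mul_const ⟪b i, d⟫).const_add ⟪b i, l⟫
    exact eventually_nhdsWithin_of_eventually_nhds
      ((hcont.eventually (eventually_lt_nhds hi)).mono fun t ht => ht.le)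

lemma mem_bTangentCone_polyhedron_iff (hl : ∀ i, ⟪b i, l⟫ ≤ c i) :
    d ∈ bTangentCone {y | ∀ i, ⟪b i, y⟫ ≤ c i} l ↔ ∀ i, ⟪b i, l⟫ = c i → ⟪b i, d⟫ ≤ 0 :=
  ⟨fun hd _ hi => inner_nonpos_of_mem_bTangentCone_polyhedron hd hi,
    fun hd => mem_bTangentCone_of_eventually (eventually_add_smul_mem_polyhedron hl hd)⟩

end Polyhedron

namespace IsPolyhedral

variable {m : ℕ} {Y : Set (Evec m)}

lemma isClosed (hY : IsPolyhedral Y) : IsClosed Y := by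
  obtain ⟨p, b, c, rfl⟩ := hY
  rw [ofPred_forall]
  exact isClosed_iInter fun i => isClosed_le (continuous_const.inner continuous_id) continuous_const

lemma convex (hY : IsPolyhedral Y) : Convex ℝ Y := by
  obtain ⟨p, b, c, rfl⟩ := hY
  rw [ofPred_forall]
  exact convex_iInter fun i => convex_halfSpace_le (innerₛₗ ℝ (b i)).isLinear (c i)

lemma eventually_add_smul_mem (hY : IsPolyhedral Y) {l d : Evec m} (hl : l ∈ Y)
    (hd : d ∈ bTangentCone Y l) : ∀ᶠ t in 𝓝[>] (0 : ℝ), l + t • d ∈ Y := by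
  obtain ⟨p, b, c, rfl⟩ := hY
  exact eventually_add_smul_mem_polyhedron hl
    fun _ hi => inner_nonpos_of_mem_bTangentCone_polyhedron hd hi

end IsPolyhedral

section Farkas

variable {E : Type*} {ι : Type*}

lemma exists_linearIndepOn_nonneg_sum_eq [AddCommGroup E] [Module ℝ E] (g : ι → E)
    (s : Finset ι) (μ : ι → ℝ) (hμ : ∀ i ∈ s, 0 ≤ μ i) :
    ∃ t ⊆ s, LinearIndepOn ℝ g (t : Set ι) ∧
      ∃ ν : ι → ℝ, (∀ i ∈ t, 0 ≤ ν i) ∧ ∑ i ∈ t, ν i • g i = ∑ i ∈ s, μ i • g i := by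
  classical
  induction s using Finset.strongInduction generalizing μ with
  | H s ih =>
    by_cases hind : LinearIndepOn ℝ g (s : Set ι)
    · exact ⟨s, subset_rfl, hind, μ, hμ, rfl⟩
    obtain ⟨f, hf, j, hj, hfj⟩ : ∃ f : ι → ℝ, ∑ i ∈ s, f i • g i = 0 ∧ ∃ j ∈ s, 0 < f j := by
      obtain ⟨f, hf, j, hj, hfj⟩ := by simpa [linearIndepOn_finset_iff] using hind
      rcases Ne.lt_or_gt hfj with hneg | hpos
      · exact ⟨-f, by simp [neg_smul, hf], j, hj, by simpa using hneg⟩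
      · exact ⟨f, hf, j, hj, hpos⟩
    -- move along the relation `f` until a first coefficient of `μ` vanishes
    obtain ⟨i₀, hi₀, hmin⟩ := (s.filter (0 < f ·)).exists_min_image (fun i => μ i / f i)
      ⟨j, Finset.mem_filter.2 ⟨hj, hfj⟩⟩
    obtain ⟨hi₀s, hfi₀⟩ := Finset.mem_filter.1 hi₀
    set r := μ i₀ / f i₀
    have hr : 0 ≤ r := div_nonneg (hμ i₀ hi₀s) hfi₀.le
    have hν : ∀ i ∈ s, 0 ≤ μ i - r * f i := by
      intro i hi
      rcases le_or_gt (f i) 0 with hfi | hfi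
      · nlinarith [hμ i hi]
      · have := hmin i (Finset.mem_filter.2 ⟨hi, hfi⟩)
        rw [le_div_iff₀ hfi] at this
        linarith
    have hsum : ∑ i ∈ s.erase i₀, (μ i - r * f i) • g i = ∑ i ∈ s, μ i • g i := by
      rw [Finset.sum_erase _ (by simp [r, div_mul_cancel₀ _ hfi₀.ne'])]
      simp only [sub_smul, Finset.sum_sub_distrib, mul_smul, ← Finset.smul_sum, hf, smul_zero,
        sub_zero]
    obtain ⟨t, hts, htind, ν, hν0, hνsum⟩ :=
      ih _ (Finset.erase_ssubset hi₀s) _ fun i hi => hν i (Finset.mem_of_mem_erase hi)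
    exact ⟨t, hts.trans (Finset.erase_subset _ _), htind, ν, hν0, hνsum.trans hsum⟩

variable [NormedAddCommGroup E] [InnerProductSpace ℝ E] [Fintype ι]

lemma isClosed_image_nonneg_sum (g : ι → E) :
    IsClosed ((fun μ : ι → ℝ => ∑ i, μ i • g i) '' Ici 0) := by
  classical
  have hunion : (fun μ : ι → ℝ => ∑ i, μ i • g i) '' Ici 0 =
      ⋃ (t : Finset ι) (_ : LinearIndepOn ℝ g (t : Set ι)),
        Fintype.linearCombination ℝ (fun i : t => g i) '' Ici 0 := by
    ext v
    simp only [mem_image, mem_iUnion, mem_Ici, Fintype.linearCombination_apply]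
    constructor
    · rintro ⟨μ, hμ, rfl⟩
      obtain ⟨t, -, ht, ν, hν, hsum⟩ :=
        exists_linearIndepOn_nonneg_sum_eq g Finset.univ μ fun i _ => hμ i
      exact ⟨t, ht, fun i => ν i, fun i => hν i i.2,
        (Finset.sum_coe_sort t fun i => ν i • g i).trans hsum⟩
    · rintro ⟨t, -, ν, hν, rfl⟩
      refine ⟨fun i => if h : i ∈ t then ν ⟨i, h⟩ else 0, fun i => ?_, ?_⟩
      · by_cases h : i ∈ t
        · simpa [h] using hν ⟨i, h⟩
        · simp [h]
      · rw [← Finset.sum_subset (Finset.subset_univ t) fun i _ hi => by simp [hi],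
          ← Finset.sum_coe_sort t]
        exact Finset.sum_congr rfl fun i _ => by simp
  rw [hunion]
  refine isClosed_iUnion_of_finite fun t => isClosed_iUnion_of_finite fun ht => ?_
  exact (LinearMap.isClosedEmbedding_of_injective
    (LinearMap.ker_eq_bot.2 ht.fintypeLinearCombination_injective)).isClosedMap _ isClosed_Ici

lemma exists_nonneg_sum_eq_of_forall_inner_nonpos [CompleteSpace E] (g : ι → E) {w : E}
    (h : ∀ d, (∀ i, ⟪g i, d⟫ ≤ 0) → ⟪w, d⟫ ≤ 0) : ∃ μ : ι → ℝ, 0 ≤ μ ∧ ∑ i, μ i • g i = w := by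
  classical
  set C := (fun μ : ι → ℝ => ∑ i, μ i • g i) '' Ici 0
  by_contra hw
  have hconv : Convex ℝ C := (convex_Ici 0).linear_image (Fintype.linearCombination ℝ g)
  obtain ⟨f, u, hfC, hfw⟩ :=
    geometric_hahn_banach_closed_point hconv (isClosed_image_nonneg_sum g) (by simpa [C] using hw)
  have hu : 0 < u := by simpa using hfC 0 ⟨0, self_mem_Ici, by simp⟩
  have hfg : ∀ i, f (g i) ≤ 0 := by
    intro i
    by_contra! hpos
    have hmem : ((u + 1) / f (g i)) • g i ∈ C :=
      ⟨Pi.single i ((u + 1) / f (g i)), Pi.single_nonneg.2 (by positivity), by simp⟩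
    have := hfC _ hmem
    rw [map_smul, smul_eq_mul, div_mul_cancel₀ _ hpos.ne'] at this
    linarith
  set d := (InnerProductSpace.toDual ℝ E).symm f
  have hd : ∀ x, ⟪x, d⟫ = f x := fun x => by
    rw [real_inner_comm]; exact InnerProductSpace.toDual_symm_apply
  have := h d fun i => (hd (g i)).trans_le (hfg i)
  linarith [hd w]

end Farkas

section NormalCone

variable {m : ℕ} {Y : Set (Evec m)} {l v d : Evec m}

def normalConeGraph (Y : Set (Evec m)) : Set (Evec m × Evec m) :=
  {q | q.1 ∈ Y ∧ q.2 ∈ convNormalCone Y q.1}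

lemma inner_nonpos_of_mem_convNormalCone_of_mem_bTangentCone (hv : v ∈ convNormalCone Y l)
    (hd : d ∈ bTangentCone Y l) : ⟪v, d⟫ ≤ 0 := by
  obtain ⟨ys, a, hys, ha, -, hdir⟩ := hd
  refine le_of_tendsto (tendsto_const_nhds.inner hdir) (Eventually.of_forall fun k => ?_)
  rw [real_inner_smul_right]
  exact mul_nonpos_of_nonneg_of_nonpos (ha k) (hv _ (hys k))

lemma inner_sub_nonneg_of_mem_normalConeGraph {q q' : Evec m × Evec m}
    (hq : q ∈ normalConeGraph Y) (hq' : q' ∈ normalConeGraph Y) :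
    0 ≤ ⟪q'.2 - q.2, q'.1 - q.1⟫ := by
  have h := hq.2 _ hq'.1
  have h' := hq'.2 _ hq.1
  rw [← neg_sub, inner_neg_right] at h'
  rw [inner_sub_left]
  linarith

lemma mem_convNormalCone_add (hv : v ∈ convNormalCone Y l) (hvd : ⟪v, d⟫ = 0) :
    v ∈ convNormalCone Y (l + d) := fun y hy => by
  rw [sub_add_eq_sub_sub, inner_sub_right, hvd, sub_zero]
  exact hv y hy

end NormalCone

section Theta

variable {m : ℕ} {Y : Set (Evec m)} {B : Evec m →L[ℝ] Evec m} {y l z : Evec m}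

noncomputable def thetaTerm (B : Evec m →L[ℝ] Evec m) (y u : Evec m) : ℝ :=
  ⟪y, u⟫ - 1 / 2 * ⟪y, B y⟫

lemma thetaTerm_le_thetaY (hy : y ∈ Y) (u : Evec m) :
    (thetaTerm B y u : EReal) ≤ thetaY Y B u :=
  le_iSup₂ (f := fun y (_ : y ∈ Y) => (thetaTerm B y u : EReal)) y hy

lemma thetaTerm_sub_thetaTerm (hBsym : ∀ u v : Evec m, ⟪B u, v⟫ = ⟪u, B v⟫) (y l z : Evec m) :
    thetaTerm B y z - thetaTerm B l z = ⟪z - B l, y - l⟫ - 1 / 2 * ⟪y - l, B (y - l)⟫ := by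
  simp only [thetaTerm, inner_sub_left, inner_sub_right, map_sub]
  linarith [hBsym l y, real_inner_comm (B l) y, real_inner_comm y z, real_inner_comm l z,
    real_inner_comm (B l) l]

lemma thetaTerm_le_thetaTerm_of_mem_convNormalCone
    (hBsym : ∀ u v : Evec m, ⟪B u, v⟫ = ⟪u, B v⟫) (hBpsd : ∀ u : Evec m, 0 ≤ ⟪u, B u⟫)
    (hN : z - B l ∈ convNormalCone Y l) (hy : y ∈ Y) : thetaTerm B y z ≤ thetaTerm B l z := by
  linarith [thetaTerm_sub_thetaTerm hBsym y l z, hN y hy, hBpsd (y - l)]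

lemma thetaY_le_thetaTerm_of_mem_convNormalCone
    (hBsym : ∀ u v : Evec m, ⟪B u, v⟫ = ⟪u, B v⟫) (hBpsd : ∀ u : Evec m, 0 ≤ ⟪u, B u⟫)
    (hN : z - B l ∈ convNormalCone Y l) : thetaY Y B z ≤ thetaTerm B l z :=
  iSup₂_le fun _ hy => EReal.coe_le_coe_iff.2
    (thetaTerm_le_thetaTerm_of_mem_convNormalCone hBsym hBpsd hN hy)

lemma mem_convNormalCone_of_forall_thetaTerm_le (hYcv : Convex ℝ Y) (hl : l ∈ Y)
    (hBsym : ∀ u v : Evec m, ⟪B u, v⟫ = ⟪u, B v⟫)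
    (hmax : ∀ y ∈ Y, thetaTerm B y z ≤ thetaTerm B l z) : z - B l ∈ convNormalCone Y l := by
  intro y hy
  set a := ⟪z - B l, y - l⟫
  set Q := ⟪y - l, B (y - l)⟫
  -- along the segment from `l` to `y`, `s * a - s ^ 2 / 2 * Q ≤ 0` forces `a ≤ 0`
  have hseg : ∀ s ∈ Ioc (0 : ℝ) 1, a ≤ s / 2 * Q := by
    rintro s ⟨hs0, hs1⟩
    have hys : l + s • (y - l) ∈ Y := by
      convert hYcv hl hy (sub_nonneg.2 hs1) hs0.le (sub_add_cancel 1 s) using 1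
      module
    have h := thetaTerm_sub_thetaTerm hBsym (l + s • (y - l)) l z
    simp only [add_sub_cancel_left, map_smul, real_inner_smul_left, real_inner_smul_right] at h
    nlinarith [hmax _ hys]
  have hlim : Tendsto (fun s : ℝ => s / 2 * Q) (𝓝[>] 0) (𝓝 0) := by
    simpa using ((tendsto_id (x := 𝓝 (0 : ℝ))).div_const 2 |>.mul_const Q).mono_left
      nhdsWithin_le_nhds
  exact ge_of_tendsto hlim (eventually_of_mem (Ioc_mem_nhdsGT one_pos) hseg)

lemma thetaY_le_thetaTerm_of_mem_subdiff (hBsym : ∀ u v : Evec m, ⟪B u, v⟫ = ⟪u, B v⟫)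
    (hBpsd : ∀ u : Evec m, 0 ≤ ⟪u, B u⟫) (hl : l ∈ subdiff (thetaY Y B) z) :
    thetaY Y B z ≤ thetaTerm B l z := by
  -- test the subgradient inequality at `B l`, where `thetaY` is attained at `l`
  have hBl : thetaY Y B (B l) ≤ thetaTerm B l (B l) :=
    thetaY_le_thetaTerm_of_mem_convNormalCone hBsym hBpsd fun y _ => by simp
  have hsplit : thetaTerm B l (B l) = thetaTerm B l z + ⟪l, B l - z⟫ := by
    simp only [thetaTerm, inner_sub_right]; ring
  rw [← (EReal.addLECancellable_coe ⟪l, B l - z⟫).add_le_add_iff_right, ← EReal.coe_add,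
    ← hsplit]
  exact (hl (B l)).trans hBl

lemma mem_of_mem_subdiff_thetaY (hYne : Y.Nonempty) (hYc : IsClosed Y) (hYcv : Convex ℝ Y)
    (hBsym : ∀ u v : Evec m, ⟪B u, v⟫ = ⟪u, B v⟫) (hBpsd : ∀ u : Evec m, 0 ≤ ⟪u, B u⟫)
    (hl : l ∈ subdiff (thetaY Y B) z) : l ∈ Y := by
  obtain ⟨y₀, hy₀⟩ := hYne
  have hup := thetaY_le_thetaTerm_of_mem_subdiff hBsym hBpsd hl
  have hlow := thetaTerm_le_thetaY hy₀ z (B := B)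
  obtain ⟨t, ht⟩ : ∃ t : ℝ, thetaY Y B z = t :=
    ⟨_, (EReal.coe_toReal (hup.trans_lt (EReal.coe_lt_top _)).ne
      ((EReal.bot_lt_coe _).trans_le hlow).ne').symm⟩
  by_contra hlY
  obtain ⟨f, u, hfY, hfl⟩ := geometric_hahn_banach_closed_point hYcv hYc hlY
  set d := (InnerProductSpace.toDual ℝ (Evec m)).symm f
  have hd : ∀ x, ⟪x, d⟫ = f x := fun x => by
    rw [real_inner_comm]; exact InnerProductSpace.toDual_symm_apply
  have hshift : thetaY Y B (z + d) ≤ ((t + u : ℝ) : EReal) := by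
    refine iSup₂_le fun y hy => EReal.coe_le_coe_iff.2 (?_ : thetaTerm B y (z + d) ≤ t + u)
    have hy' := EReal.coe_le_coe_iff.1 (ht ▸ thetaTerm_le_thetaY hy z (B := B))
    have : thetaTerm B y (z + d) = thetaTerm B y z + ⟪y, d⟫ := by
      simp only [thetaTerm, inner_add_right]; ring
    linarith [hfY y hy, hd y]
  have := (hl (z + d)).trans hshift
  rw [ht, add_sub_cancel_left, ← EReal.coe_add, EReal.coe_le_coe_iff, hd] at this
  linarith

lemma mem_subdiff_thetaY_iff (hYne : Y.Nonempty) (hYc : IsClosed Y) (hYcv : Convex ℝ Y)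
    (hBsym : ∀ u v : Evec m, ⟪B u, v⟫ = ⟪u, B v⟫) (hBpsd : ∀ u : Evec m, 0 ≤ ⟪u, B u⟫) :
    l ∈ subdiff (thetaY Y B) z ↔ (l, z - B l) ∈ normalConeGraph Y := by
  refine ⟨fun hl => ?_, fun ⟨hlY, hN⟩ u => ?_⟩
  · have hlY := mem_of_mem_subdiff_thetaY hYne hYc hYcv hBsym hBpsd hl
    refine ⟨hlY, mem_convNormalCone_of_forall_thetaTerm_le hYcv hlY hBsym fun y hy => ?_⟩
    exact EReal.coe_le_coe_iff.1 ((thetaTerm_le_thetaY hy z).trans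
      (thetaY_le_thetaTerm_of_mem_subdiff hBsym hBpsd hl))
  · have hshift : thetaTerm B l z + ⟪l, u - z⟫ = thetaTerm B l u := by
      simp only [thetaTerm, inner_sub_right]; ring
    calc thetaY Y B z + ((⟪l, u - z⟫ : ℝ) : EReal)
        ≤ ((thetaTerm B l z + ⟪l, u - z⟫ : ℝ) : EReal) := by
          rw [EReal.coe_add]
          gcongr
          exact thetaY_le_thetaTerm_of_mem_convNormalCone hBsym hBpsd hN
      _ ≤ thetaY Y B u := hshift ▸ thetaTerm_le_thetaY hlY u

end Theta

section NormalConeGraph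

variable {m : ℕ} {Y : Set (Evec m)} {l v η w : Evec m}

lemma exists_eq_sub_smul_of_mem_polarCone (hY : IsPolyhedral Y)
    (hq : (l, v) ∈ normalConeGraph Y)
    (hw : w ∈ polarCone (bTangentCone Y l ∩ {d | ⟪v, d⟫ = 0})) :
    ∃ n ∈ convNormalCone Y l, ∃ s : ℝ, 0 ≤ s ∧ w = n - s • v := by
  classical
  obtain ⟨p, b, c, rfl⟩ := hY
  obtain ⟨hl, hv⟩ := hq
  -- the critical cone is cut out by the active constraints and `⟪-v, ·⟫ ≤ 0`,
  -- because `⟪v, ·⟫ ≤ 0` already holds on the tangent cone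
  obtain ⟨μ, hμ, hsum⟩ := exists_nonneg_sum_eq_of_forall_inner_nonpos
    (fun o : Option {i // ⟪b i, l⟫ = c i} => o.elim (-v) fun i => b i) (w := w) fun d hd => by
      have hdT : d ∈ bTangentCone _ l :=
        (mem_bTangentCone_polyhedron_iff hl).2 fun i hi => hd (some ⟨i, hi⟩)
      have h₁ := inner_nonpos_of_mem_convNormalCone_of_mem_bTangentCone hv hdT
      have h₂ : ⟪-v, d⟫ ≤ 0 := hd none
      rw [inner_neg_left] at h₂
      exact hw d ⟨hdT, le_antisymm h₁ (neg_nonpos.1 h₂)⟩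
  rw [Fintype.sum_option] at hsum
  refine ⟨∑ i, μ (some i) • b i, fun y hy => ?_, μ none, hμ none, ?_⟩
  · rw [sum_inner]
    refine Finset.sum_nonpos fun i _ => ?_
    rw [real_inner_smul_left, inner_sub_right, i.2]
    exact mul_nonpos_of_nonneg_of_nonpos (hμ _) (sub_nonpos.2 (hy i))
  · rw [← hsum]
    simp only [Option.elim_none, Option.elim_some, smul_neg]
    abel

lemma mem_bTangentCone_normalConeGraph (hY : IsPolyhedral Y) (hq : (l, v) ∈ normalConeGraph Y)
    (hη : η ∈ bTangentCone Y l ∩ {d | ⟪v, d⟫ = 0})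
    (hw : w ∈ polarCone (bTangentCone Y l ∩ {d | ⟪v, d⟫ = 0})) (hwη : ⟪w, η⟫ = 0) :
    (η, w) ∈ bTangentCone (normalConeGraph Y) (l, v) := by
  obtain ⟨n, hn, s, hs, rfl⟩ := exists_eq_sub_smul_of_mem_polarCone hY hq hw
  have hvη : ⟪v, η⟫ = 0 := hη.2
  have hsmall : ∀ᶠ t in 𝓝[>] (0 : ℝ), t * s < 1 := by
    refine eventually_nhdsWithin_of_eventually_nhds ?_
    exact ((tendsto_id (x := 𝓝 (0 : ℝ))).mul_const s).eventually_lt_const (by simp)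
  refine mem_bTangentCone_of_eventually ?_
  filter_upwards [hY.eventually_add_smul_mem hq.1 hη.1, hsmall, self_mem_nhdsWithin]
    with t hlt hts (ht : 0 < t)
  change (l + t • η, v + t • (n - s • v)) ∈ normalConeGraph Y
  refine ⟨hlt, mem_convNormalCone_add (fun y hy => ?_) ?_⟩
  · -- `v + t • (n - s • v) = (1 - t * s) • v + t • n` is a nonnegative combination
    have hvy := hq.2 y hy
    have hny := hn y hy
    rw [inner_add_left, real_inner_smul_left, inner_sub_left, real_inner_smul_left]
    nlinarith
  · rw [inner_add_left, real_inner_smul_left, real_inner_smul_right, real_inner_smul_right, hvη,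
      hwη]
    ring

lemma mem_critCone_of_mem_bTangentCone_normalConeGraph (hY : IsPolyhedral Y)
    (hq : (l, v) ∈ normalConeGraph Y) (h : (η, w) ∈ bTangentCone (normalConeGraph Y) (l, v)) :
    η ∈ bTangentCone Y l ∩ {d | ⟪v, d⟫ = 0} ∧
      w ∈ polarCone (bTangentCone Y l ∩ {d | ⟪v, d⟫ = 0}) ∧ ⟪w, η⟫ = 0 := by
  obtain ⟨qs, a, hqs, ha, hlim, hdir⟩ := h
  have hη : Tendsto (fun k => a k • ((qs k).1 - l)) atTop (𝓝 η) :=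
    (continuous_fst.tendsto _).comp hdir
  have hw : Tendsto (fun k => a k • ((qs k).2 - v)) atTop (𝓝 w) :=
    (continuous_snd.tendsto _).comp hdir
  have hηT : η ∈ bTangentCone Y l :=
    ⟨_, a, fun k => (hqs k).1, ha, (continuous_fst.tendsto _).comp hlim, hη⟩
  have hgap : Tendsto (fun k => ⟪(qs k).2, a k • ((qs k).1 - l)⟫) atTop (𝓝 ⟪v, η⟫) :=
    ((continuous_snd.tendsto _).comp hlim).inner hη
  have hgap_nonneg : ∀ k, 0 ≤ ⟪(qs k).2, a k • ((qs k).1 - l)⟫ := fun k => by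
    have := (hqs k).2 l hq.1
    rw [← neg_sub, inner_neg_right] at this
    rw [real_inner_smul_right]
    exact mul_nonneg (ha k) (by linarith)
  have hvη : ⟪v, η⟫ = 0 :=
    le_antisymm (inner_nonpos_of_mem_convNormalCone_of_mem_bTangentCone hq.2 hηT)
      (ge_of_tendsto' hgap hgap_nonneg)
  have hwK : w ∈ polarCone (bTangentCone Y l ∩ {d | ⟪v, d⟫ = 0}) := by
    rintro ζ ⟨hζT, hvζ : ⟪v, ζ⟫ = 0⟩
    obtain ⟨t, hζ, ht : 0 < t⟩ :=
      ((hY.eventually_add_smul_mem hq.1 hζT).and self_mem_nhdsWithin).exists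
    have hle : ∀ k, t * ⟪a k • ((qs k).2 - v), ζ⟫ ≤ ⟪(qs k).2, a k • ((qs k).1 - l)⟫ :=
      fun k => by
        have := (hqs k).2 _ hζ
        simp only [real_inner_smul_left, real_inner_smul_right, inner_sub_left, inner_sub_right,
          inner_add_right, hvζ] at this ⊢
        nlinarith [ha k]
    have := le_of_tendsto_of_tendsto' ((hw.inner tendsto_const_nhds).const_mul t) hgap hle
    rw [hvη] at this
    nlinarith
  refine ⟨⟨hηT, hvη⟩, hwK, le_antisymm (hwK η ⟨hηT, hvη⟩) (ge_of_tendsto' (hw.inner hη) ?_)⟩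
  intro k
  rw [real_inner_smul_left, real_inner_smul_right, ← mul_assoc]
  exact mul_nonneg (mul_self_nonneg _) (inner_sub_nonneg_of_mem_normalConeGraph hq (hqs k))

end NormalConeGraph

lemma gDeriv_subdiff_thetaY_iff {m : ℕ} {Y : Set (Evec m)} {B : Evec m →L[ℝ] Evec m}
    {z l : Evec m} (hYne : Y.Nonempty) (hY : IsPolyhedral Y)
    (hBsym : ∀ u v : Evec m, ⟪B u, v⟫ = ⟪u, B v⟫) (hBpsd : ∀ u : Evec m, 0 ≤ ⟪u, B u⟫)
    (hl : l ∈ subdiff (thetaY Y B) z) (u η : Evec m) :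
    η ∈ gDeriv (subdiff (thetaY Y B)) z l u ↔
      η ∈ critCone Y B z l ∧ u - B η ∈ polarCone (critCone Y B z l) ∧ ⟪u - B η, η⟫ = 0 := by
  have hgraph : ∀ z' l', l' ∈ subdiff (thetaY Y B) z' ↔ (l', z' - B l') ∈ normalConeGraph Y :=
    fun _ _ => mem_subdiff_thetaY_iff hYne hY.isClosed hY.convex hBsym hBpsd
  let T : Evec m × Evec m →L[ℝ] Evec m × Evec m :=
    (ContinuousLinearMap.snd ℝ _ _).prod
      (ContinuousLinearMap.fst ℝ _ _ - B ∘L ContinuousLinearMap.snd ℝ _ _)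
  let S : Evec m × Evec m →L[ℝ] Evec m × Evec m :=
    (B ∘L ContinuousLinearMap.fst ℝ _ _ + ContinuousLinearMap.snd ℝ _ _).prod
      (ContinuousLinearMap.fst ℝ _ _)
  have hT : MapsTo T (svGraph (subdiff (thetaY Y B))) (normalConeGraph Y) :=
    fun q hq => (hgraph q.1 q.2).1 hq
  have hS : MapsTo S (normalConeGraph Y) (svGraph (subdiff (thetaY Y B))) :=
    fun q hq => (hgraph _ q.1).2 (by simpa [S] using hq)
  constructor
  · intro h
    exact mem_critCone_of_mem_bTangentCone_normalConeGraph hY ((hgraph z l).1 hl)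
      (map_mem_bTangentCone T hT h)
  · rintro ⟨hη, hw, hwη⟩
    simpa [S, gDeriv] using map_mem_bTangentCone S hS
      (mem_bTangentCone_normalConeGraph hY ((hgraph z l).1 hl) hη hw hwη)

theorem criticality_description_general {n m : ℕ} (Y : Set (Evec m)) (hYne : Y.Nonempty) (hYpoly : IsPolyhedral Y)
    (B : Evec m →L[ℝ] Evec m) (hBsym : ∀ u v : Evec m, ⟪B u, v⟫ = ⟪u, B v⟫)
    (hBpsd : ∀ u : Evec m, 0 ≤ ⟪u, B u⟫)
    (f : Evec n → Evec n)
    (Φ : Evec n → Evec m)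
    (xo : Evec n) (lmo : Evec m)
    (hsol2 : lmo ∈ subdiff (thetaY Y B) (Φ xo)) :
    (IsCriticalMult Y B f Φ xo lmo ↔
      ∃ (ξ : Evec n) (η : Evec m), ξ ≠ 0 ∧
        fderiv ℝ (fun x => Psi f Φ x lmo) xo ξ +
          ContinuousLinearMap.adjoint (fderiv ℝ Φ xo) η = 0 ∧
        ⟪fderiv ℝ Φ xo ξ - B η, η⟫ = 0 ∧
        fderiv ℝ Φ xo ξ - B η ∈ polarCone (critCone Y B (Φ xo) lmo) ∧
        η ∈ critCone Y B (Φ xo) lmo) ∧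
    (IsNoncriticalMult Y B f Φ xo lmo ↔
      ∀ (ξ : Evec n) (η : Evec m),
        (fderiv ℝ (fun x => Psi f Φ x lmo) xo ξ +
            ContinuousLinearMap.adjoint (fderiv ℝ Φ xo) η = 0 ∧
          ⟪fderiv ℝ Φ xo ξ - B η, η⟫ = 0 ∧
          fderiv ℝ Φ xo ξ - B η ∈ polarCone (critCone Y B (Φ xo) lmo) ∧
          η ∈ critCone Y B (Φ xo) lmo) → ξ = 0) := by
  have hD := fun ξ => gDeriv_subdiff_thetaY_iff hYne hYpoly hBsym hBpsd hsol2 (fderiv ℝ Φ xo ξ)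
  simp only [IsCriticalMult, IsNoncriticalMult, hD]
  refine ⟨⟨?_, ?_⟩, ⟨?_, ?_⟩⟩
  · rintro ⟨ξ, hξ, η, ⟨hK, hP, hc⟩, heq⟩
    exact ⟨ξ, η, hξ, heq, hc, hP, hK⟩
  · rintro ⟨ξ, η, hξ, heq, hc, hP, hK⟩
    exact ⟨ξ, hξ, η, ⟨hK, hP, hc⟩, heq⟩
  · rintro h ξ η ⟨heq, hc, hP, hK⟩
    exact h ξ η ⟨hK, hP, hc⟩ heq
  · rintro h ξ η ⟨hK, hP, hc⟩ heq
    exact h ξ η ⟨heq, hc, hP, hK⟩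

/-- Equivalent description of criticality via piecewise linear-quadratic penalties. -/
theorem criticality_description {n m : ℕ} (Y : Set (Evec m)) (hYne : Y.Nonempty) (hYpoly : IsPolyhedral Y)
    (B : Evec m →L[ℝ] Evec m) (hBsym : ∀ u v : Evec m, ⟪B u, v⟫ = ⟪u, B v⟫)
    (hBpsd : ∀ u : Evec m, 0 ≤ ⟪u, B u⟫)
    (f : Evec n → Evec n) (hf : Differentiable ℝ f)
    (Φ : Evec n → Evec m) (hΦ : ContDiff ℝ 2 Φ)
    (xo : Evec n) (lmo : Evec m)
    (hsol1 : Psi f Φ xo lmo = 0)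
    (hsol2 : lmo ∈ subdiff (thetaY Y B) (Φ xo)) :
    (IsCriticalMult Y B f Φ xo lmo ↔
      ∃ (ξ : Evec n) (η : Evec m), ξ ≠ 0 ∧
        fderiv ℝ (fun x => Psi f Φ x lmo) xo ξ +
          ContinuousLinearMap.adjoint (fderiv ℝ Φ xo) η = 0 ∧
        ⟪fderiv ℝ Φ xo ξ - B η, η⟫ = 0 ∧
        fderiv ℝ Φ xo ξ - B η ∈ polarCone (critCone Y B (Φ xo) lmo) ∧
        η ∈ critCone Y B (Φ xo) lmo) ∧
    (IsNoncriticalMult Y B f Φ xo lmo ↔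
      ∀ (ξ : Evec n) (η : Evec m),
        (fderiv ℝ (fun x => Psi f Φ x lmo) xo ξ +
            ContinuousLinearMap.adjoint (fderiv ℝ Φ xo) η = 0 ∧
          ⟪fderiv ℝ Φ xo ξ - B η, η⟫ = 0 ∧
          fderiv ℝ Φ xo ξ - B η ∈ polarCone (critCone Y B (Φ xo) lmo) ∧
          η ∈ critCone Y B (Φ xo) lmo) → ξ = 0) :=
  criticality_description_general Y hYne hYpoly B hBsym hBpsd f Φ xo lmo hsol2
end

section
/- Let (x̄,λ̄) be a solution of the KKT system ∇_xL(x,λ) = 0, λ ∈ ∂θ(Φ(x)) for the ENLP, set z̄ := Φ(x̄), and let K := T_Y(λ̄) ∩ {z̄ − Bλ̄}^⊥ be the critical cone. Then for every w ∈ ℝ^n the second subderivative of φ := φ₀ + θ∘Φ satisfies d²φ(x̄,0)(w) ≥ ⟨∇²_{xx}L(x̄,λ̄)w, w⟩ + 2 θ_{K,B}(∇Φ(x̄)w). -/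
/-!
For `κ` in the critical cone, polyhedrality of `Y` keeps `λ̄ + t κ` in `Y` for small `t > 0`,
so `φ x ≥ L(x, λ̄) + t ⟪κ, Φ x⟫ - t ⟪κ, B λ̄⟫ - t² ⟪κ, B κ⟫ / 2`, while the KKT condition gives
`φ x̄ ≤ L(x̄, λ̄)` (test the subgradient inequality at `B λ̄`). As `κ ⊥ Φ x̄ - B λ̄`, putting
`x = x̄ + t w'` and dividing by `t² / 2` bounds the quotient defining `d²φ(x̄, 0)(w)` from below
by a quantity tending to `⟪∇²L w, w⟫ + 2 ⟪κ, ∇Φ(x̄) w⟫ - ⟪κ, B κ⟫`, because `∇ₓL(x̄, λ̄) = 0`.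
The supremum over `κ` of the right-hand side is `⟪∇²L w, w⟫ + 2 θ_{K,B}(∇Φ(x̄) w)`.
-/

open Filter Topology Metric Set Pointwise
open scoped RealInnerProductSpace

open InnerProductSpace Asymptotics

theorem IsPolyhedral.eventually_add_smul_mem_s7 {k : ℕ} {Y : Set (Evec k)} (hY : IsPolyhedral Y)
    {y κ : Evec k} (hκ : κ ∈ bTangentCone Y y) : ∀ᶠ t in 𝓝[>] (0 : ℝ), y + t • κ ∈ Y := by
  obtain ⟨p, b, c, rfl⟩ := hY
  obtain ⟨ys, a, hys, ha, hy, hlim⟩ := hκ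
  have hy_mem : ∀ i, ⟪b i, y⟫ ≤ c i := fun i =>
    le_of_tendsto (tendsto_const_nhds.inner hy) (.of_forall fun j => hys j i)
  simp only [Set.mem_ofPred_eq, eventually_all]
  intro i
  rcases (hy_mem i).eq_or_lt with hactive | hslack
  · have hbκ : ⟪b i, κ⟫ ≤ 0 := by
      refine le_of_tendsto (tendsto_const_nhds.inner hlim) (.of_forall fun j => ?_)
      rw [real_inner_smul_right, inner_sub_right]
      exact mul_nonpos_of_nonneg_of_nonpos (ha j) (by linarith [hys j i])
    filter_upwards [self_mem_nhdsWithin] with t (ht : 0 < t)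
    rw [inner_add_right, real_inner_smul_right]
    nlinarith
  · have hcont : Tendsto (fun t : ℝ => ⟪b i, y + t • κ⟫) (𝓝 0) (𝓝 ⟪b i, y⟫) := by
      simpa using tendsto_const_nhds.inner
        (tendsto_const_nhds.add ((tendsto_id (x := 𝓝 (0 : ℝ))).smul_const κ))
    exact ((hcont.eventually_lt_const hslack).filter_mono nhdsWithin_le_nhds).mono
      fun t ht => ht.le

theorem tendsto_fst_smul_snd {E : Type*} [NormedAddCommGroup E] [NormedSpace ℝ E] (w : E) :
    Tendsto (fun p : ℝ × E => p.1 • p.2) (𝓝[>] 0 ×ˢ 𝓝 w) (𝓝 0) := by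
  simpa using ((tendsto_nhdsWithin_of_tendsto_nhds tendsto_id).comp tendsto_fst).smul
    (tendsto_snd (f := 𝓝[>] (0 : ℝ)) (g := 𝓝 w))

theorem HasFDerivAt.tendsto_inv_smul_sub {E F : Type*} [NormedAddCommGroup E] [NormedSpace ℝ E]
    [NormedAddCommGroup F] [NormedSpace ℝ F] {f : E → F} {f' : E →L[ℝ] F} {x : E}
    (hf : HasFDerivAt f f' x) (w : E) :
    Tendsto (fun p : ℝ × E => p.1⁻¹ • (f (x + p.1 • p.2) - f x))
      (𝓝[>] 0 ×ˢ 𝓝 w) (𝓝 (f' w)) := by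
  refine (hasFDerivWithinAt_univ.2 hf).lim (tendsto_fst_smul_snd w)
    (.of_forall fun _ => mem_univ _) ?_
  refine tendsto_snd.congr' ?_
  filter_upwards [prod_mem_prod self_mem_nhdsWithin univ_mem] with p hp
  rw [smul_smul, inv_mul_cancel₀ (ne_of_gt hp.1), one_smul]

section SecondOrder

variable {E : Type*} [NormedAddCommGroup E] [NormedSpace ℝ E] {f : E → ℝ} {f' : E → E →L[ℝ] ℝ}
  {f'' : E →L[ℝ] E →L[ℝ] ℝ} {x : E}

theorem isLittleO_taylor_two (hf : ∀ᶠ y in 𝓝 x, HasFDerivAt f (f' y) y)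
    (hf' : HasFDerivAt f' f'' x) :
    (fun u => f (x + u) - f x - f' x u - f'' u u / 2) =o[𝓝 0] fun u => ‖u‖ ^ 2 := by
  refine isLittleO_iff.2 fun c hc => ?_
  obtain ⟨δ, hδ, hball⟩ :=
    Metric.eventually_nhds_iff_ball.1 (hf.and (isLittleO_iff.1 hf'.isLittleO hc))
  filter_upwards [Metric.ball_mem_nhds 0 hδ] with u hu
  rw [mem_ball_zero_iff] at hu
  have hseg : ∀ s ∈ Icc (0 : ℝ) 1, x + s • u ∈ Metric.ball x δ ∧ ‖s • u‖ ≤ ‖u‖ := fun s hs => by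
    have : ‖s • u‖ ≤ ‖u‖ := by
      rw [norm_smul, Real.norm_of_nonneg hs.1]
      exact mul_le_of_le_one_left (norm_nonneg u) hs.2
    exact ⟨by simpa [Metric.mem_ball, dist_eq_norm] using this.trans_lt hu, this⟩
  have hderiv : ∀ s ∈ Icc (0 : ℝ) 1, HasDerivWithinAt
      (fun s : ℝ => f (x + s • u) - s * f' x u - s ^ 2 / 2 * f'' u u)
      ((f' (x + s • u) - f' x - f'' (s • u)) u) (Icc 0 1) s := fun s hs => by
    have hline : HasDerivAt (fun s : ℝ => x + s • u) u s := by
      simpa using ((hasDerivAt_id s).smul_const u).const_add x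
    have hq : HasDerivAt (fun s : ℝ => s ^ 2 / 2 * f'' u u) (s * f'' u u) s := by
      simpa using ((hasDerivAt_pow 2 s).div_const 2).mul_const (f'' u u)
    have := (((hball _ (hseg s hs).1).1.comp_hasDerivAt s hline).sub
      ((hasDerivAt_id s).mul_const (f' x u))).sub hq
    refine (this.congr_deriv ?_).hasDerivWithinAt
    simp only [sub_apply, map_smul, smul_apply, smul_eq_mul, one_mul]
  have hbound : ∀ s ∈ Icc (0 : ℝ) 1, ‖(f' (x + s • u) - f' x - f'' (s • u)) u‖ ≤ c * ‖u‖ ^ 2 :=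
    fun s hs => by
      have h := (hball _ (hseg s hs).1).2
      simp only [add_sub_cancel_left] at h
      calc ‖(f' (x + s • u) - f' x - f'' (s • u)) u‖
          ≤ ‖f' (x + s • u) - f' x - f'' (s • u)‖ * ‖u‖ := ContinuousLinearMap.le_opNorm _ _
        _ ≤ c * ‖u‖ * ‖u‖ := by gcongr; exact h.trans (by gcongr; exact (hseg s hs).2)
        _ = c * ‖u‖ ^ 2 := by ring
  have := (convex_Icc 0 1).norm_image_sub_le_of_norm_hasDerivWithin_le hderiv hbound
    (left_mem_Icc.2 zero_le_one) (right_mem_Icc.2 zero_le_one)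
  calc ‖f (x + u) - f x - f' x u - f'' u u / 2‖
      = ‖(f (x + (1 : ℝ) • u) - 1 * f' x u - 1 ^ 2 / 2 * f'' u u)
          - (f (x + (0 : ℝ) • u) - 0 * f' x u - 0 ^ 2 / 2 * f'' u u)‖ := by
        congr 1; simp only [one_smul, zero_smul, add_zero]; ring
    _ ≤ c * ‖u‖ ^ 2 * ‖(1 : ℝ) - 0‖ := this
    _ = c * ‖‖u‖ ^ 2‖ := by simp

theorem tendsto_two_div_sq_mul_sub_sub (hf : ∀ᶠ y in 𝓝 x, HasFDerivAt f (f' y) y)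
    (hf' : HasFDerivAt f' f'' x) (w : E) :
    Tendsto (fun p : ℝ × E => 2 / p.1 ^ 2 * (f (x + p.1 • p.2) - f x - p.1 * f' x p.2))
      (𝓝[>] 0 ×ˢ 𝓝 w) (𝓝 (f'' w w)) := by
  have hscale : (fun p : ℝ × E => ‖p.1 • p.2‖ ^ 2) =O[𝓝[>] 0 ×ˢ 𝓝 w] fun p => p.1 ^ 2 := by
    have hbdd := ((continuous_norm.tendsto w).pow 2).comp (tendsto_snd (f := 𝓝[>] (0 : ℝ)))
    simpa [norm_smul, mul_pow] using (isBigO_refl (fun p : ℝ × E => p.1 ^ 2) _).mul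
      (hbdd.isBigO_one ℝ)
  have hrem := (((isLittleO_taylor_two hf hf').comp_tendsto (tendsto_fst_smul_snd w)).trans_isBigO
    hscale).tendsto_div_nhds_zero
  have hquad : Tendsto (fun p : ℝ × E => f'' p.2 p.2) (𝓝[>] 0 ×ˢ 𝓝 w) (𝓝 (f'' w w)) :=
    ((f''.continuous₂.comp (continuous_id.prodMk continuous_id)).tendsto w).comp tendsto_snd
  refine (by simpa using (hrem.const_mul 2).add hquad : Tendsto _ _ _).congr' ?_
  filter_upwards [prod_mem_prod self_mem_nhdsWithin univ_mem] with p hp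
  have : p.1 ≠ 0 := ne_of_gt hp.1
  field_simp
  ring

end SecondOrder

theorem inner_fderiv_gradient_apply {E : Type*} [NormedAddCommGroup E] [InnerProductSpace ℝ E]
    [CompleteSpace E] (f : E → ℝ) (x v w : E) :
    ⟪fderiv ℝ (gradient f) x v, w⟫ = fderiv ℝ (fderiv ℝ f) x v w := by
  have : gradient f = (toDual ℝ E).symm ∘ fderiv ℝ f := rfl
  rw [this, LinearIsometryEquiv.comp_fderiv]
  exact toDual_symm_apply

theorem EReal.coe_add_two_mul_biSup_le {ι : Type*} {K : Set ι} {g : ι → ℝ} {a : ℝ} {s : EReal}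
    (h : ∀ i ∈ K, ((a + 2 * g i : ℝ) : EReal) ≤ s) :
    (a : EReal) + 2 * ⨆ i ∈ K, (g i : EReal) ≤ s := by
  -- `x ↦ a + 2 x` is monotone, continuous and fixes `⊥`, so it commutes with suprema
  set F : EReal → EReal := fun x => a + ((2 : ℝ) : EReal) * x
  have hmono : Monotone F := fun x y hxy =>
    add_le_add le_rfl (mul_le_mul_of_nonneg_left hxy (EReal.coe_nonneg.2 zero_le_two))
  have hcont : Continuous F := continuous_iff_continuousAt.2 fun x =>
    (EReal.continuousAt_add (.inl (EReal.coe_ne_top a)) (.inl (EReal.coe_ne_bot a))).tendsto.comp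
      (tendsto_const_nhds.prodMk_nhds (EReal.Tendsto.const_mul tendsto_id
        (.inl (EReal.coe_ne_bot 2)) (.inl (EReal.coe_ne_top 2))))
  have hbot : F ⊥ = ⊥ := by simp [F, EReal.coe_mul_bot_of_pos zero_lt_two]
  show F (⨆ i ∈ K, (g i : EReal)) ≤ s
  rw [hmono.map_iSup_of_continuousAt hcont.continuousAt hbot]
  refine iSup_le fun i => ?_
  rw [hmono.map_iSup_of_continuousAt hcont.continuousAt hbot]
  exact iSup_le fun hi => by simpa [F] using h i hi

section Penalty

variable {k : ℕ} {Y : Set (Evec k)} {B : Evec k →L[ℝ] Evec k}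

theorem coe_le_thetaY {y : Evec k} (hy : y ∈ Y) (u : Evec k) :
    ((⟪y, u⟫ - 1 / 2 * ⟪y, B y⟫ : ℝ) : EReal) ≤ thetaY Y B u :=
  le_iSup₂ (f := fun y (_ : y ∈ Y) => ((⟪y, u⟫ - 1 / 2 * ⟪y, B y⟫ : ℝ) : EReal)) y hy

theorem thetaY_apply_le (hBsym : ∀ u v : Evec k, ⟪B u, v⟫ = ⟪u, B v⟫)
    (hBpsd : ∀ u : Evec k, 0 ≤ ⟪u, B u⟫) (lam : Evec k) :
    thetaY Y B (B lam) ≤ ((1 / 2 * ⟪lam, B lam⟫ : ℝ) : EReal) := by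
  refine iSup₂_le fun y _ => EReal.coe_le_coe_iff.2 ?_
  have hsq := hBpsd (y - lam)
  have hsymm : ⟪lam, B y⟫ = ⟪y, B lam⟫ := by rw [real_inner_comm, hBsym]
  simp only [map_sub, inner_sub_left, inner_sub_right] at hsq
  linarith

theorem thetaY_le_of_mem_subdiff (hBsym : ∀ u v : Evec k, ⟪B u, v⟫ = ⟪u, B v⟫)
    (hBpsd : ∀ u : Evec k, 0 ≤ ⟪u, B u⟫) {z lam : Evec k} (h : lam ∈ subdiff (thetaY Y B) z) :
    thetaY Y B z ≤ ((⟪lam, z⟫ - 1 / 2 * ⟪lam, B lam⟫ : ℝ) : EReal) := by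
  have hsub := (h (B lam)).trans (thetaY_apply_le hBsym hBpsd lam)
  calc thetaY Y B z
      = thetaY Y B z + ((⟪lam, B lam - z⟫ : ℝ) : EReal) - ((⟪lam, B lam - z⟫ : ℝ) : EReal) :=
        (EReal.add_sub_cancel_right).symm
    _ ≤ ((1 / 2 * ⟪lam, B lam⟫ : ℝ) : EReal) - ((⟪lam, B lam - z⟫ : ℝ) : EReal) :=
        EReal.sub_le_sub hsub le_rfl
    _ = ((⟪lam, z⟫ - 1 / 2 * ⟪lam, B lam⟫ : ℝ) : EReal) := by
        rw [← EReal.coe_sub, inner_sub_right]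
        ring_nf

end Penalty

theorem coe_le_enlpPhi_sub_enlpPhi {n m : ℕ} {Y : Set (Evec m)} {B : Evec m →L[ℝ] Evec m}
    {φ₀ : Evec n → ℝ} {Φ : Evec n → Evec m} {xo : Evec n} {lmo κ : Evec m}
    (hBsym : ∀ u v : Evec m, ⟪B u, v⟫ = ⟪u, B v⟫)
    (hθ : thetaY Y B (Φ xo) ≤ ((⟪lmo, Φ xo⟫ - 1 / 2 * ⟪lmo, B lmo⟫ : ℝ) : EReal))
    (hκ : ⟪Φ xo - B lmo, κ⟫ = 0) {t : ℝ} (ht : lmo + t • κ ∈ Y) (x : Evec n) :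
    ((Lag B φ₀ Φ x lmo - Lag B φ₀ Φ xo lmo + t * ⟪κ, Φ x - Φ xo⟫ - t ^ 2 / 2 * ⟪κ, B κ⟫ : ℝ) :
        EReal) ≤ enlpPhi Y B φ₀ Φ x - enlpPhi Y B φ₀ Φ xo := by
  have hx : ((φ₀ x + (⟪lmo + t • κ, Φ x⟫ - 1 / 2 * ⟪lmo + t • κ, B (lmo + t • κ)⟫) : ℝ) :
      EReal) ≤ enlpPhi Y B φ₀ Φ x := by
    rw [EReal.coe_add]
    exact add_le_add le_rfl (coe_le_thetaY ht _)
  have hxo : enlpPhi Y B φ₀ Φ xo ≤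
      ((φ₀ xo + (⟪lmo, Φ xo⟫ - 1 / 2 * ⟪lmo, B lmo⟫) : ℝ) : EReal) := by
    rw [EReal.coe_add]
    exact add_le_add le_rfl hθ
  refine le_of_eq_of_le ?_ (EReal.sub_le_sub hx hxo)
  rw [← EReal.coe_sub, EReal.coe_eq_coe_iff]
  have hcross : ⟪κ, B lmo⟫ = ⟪κ, Φ xo⟫ := by
    rw [inner_sub_left, sub_eq_zero] at hκ
    rw [real_inner_comm, ← hκ, real_inner_comm]
  have hsymm : ⟪lmo, B κ⟫ = ⟪κ, B lmo⟫ := by rw [real_inner_comm, hBsym]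
  simp only [Lag, map_add, map_smul, inner_add_left, inner_add_right, real_inner_smul_left,
    real_inner_smul_right, inner_sub_right, hsymm, hcross, real_inner_comm lmo]
  ring

theorem coe_le_secondSubderiv_of_mem_critCone {n m : ℕ} {Y : Set (Evec m)}
    {B : Evec m →L[ℝ] Evec m} {φ₀ : Evec n → ℝ} {Φ : Evec n → Evec m} {xo : Evec n}
    {lmo κ : Evec m} (hYpoly : IsPolyhedral Y) (hBsym : ∀ u v : Evec m, ⟪B u, v⟫ = ⟪u, B v⟫)
    (hθ : thetaY Y B (Φ xo) ≤ ((⟪lmo, Φ xo⟫ - 1 / 2 * ⟪lmo, B lmo⟫ : ℝ) : EReal))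
    (hL : ContDiff ℝ 2 fun x => Lag B φ₀ Φ x lmo)
    (hL0 : fderiv ℝ (fun x => Lag B φ₀ Φ x lmo) xo = 0) (hΦ : DifferentiableAt ℝ Φ xo)
    (hκ : κ ∈ critCone Y B (Φ xo) lmo) (w : Evec n) :
    ((fderiv ℝ (fderiv ℝ fun x => Lag B φ₀ Φ x lmo) xo w w +
        2 * (⟪κ, fderiv ℝ Φ xo w⟫ - 1 / 2 * ⟪κ, B κ⟫) : ℝ) : EReal) ≤
      secondSubderiv (enlpPhi Y B φ₀ Φ) xo 0 w := by
  set L := fun x => Lag B φ₀ Φ x lmo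
  have hsecond := tendsto_two_div_sq_mul_sub_sub
    (.of_forall fun y => (hL.differentiable two_ne_zero y).hasFDerivAt)
    ((hL.fderiv_right (by norm_num)).differentiable one_ne_zero xo).hasFDerivAt w
  have hfirst := (tendsto_const_nhds (x := κ)).inner (𝕜 := ℝ)
    (hΦ.hasFDerivAt.tendsto_inv_smul_sub w)
  have hlim := (hsecond.add (hfirst.const_mul 2)).sub_const ⟪κ, B κ⟫
  have hbound : ∀ᶠ p : ℝ × Evec n in 𝓝[>] 0 ×ˢ 𝓝 w,
      ((2 / p.1 ^ 2 * (L (xo + p.1 • p.2) - L xo - p.1 * fderiv ℝ L xo p.2) +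
          2 * ⟪κ, p.1⁻¹ • (Φ (xo + p.1 • p.2) - Φ xo)⟫ - ⟪κ, B κ⟫ : ℝ) : EReal) ≤
        ((2 / p.1 ^ 2 : ℝ) : EReal) * (enlpPhi Y B φ₀ Φ (xo + p.1 • p.2) - enlpPhi Y B φ₀ Φ xo -
          ((p.1 * ⟪(0 : Evec n), p.2⟫ : ℝ) : EReal)) := by
    filter_upwards [prod_mem_prod (inter_mem self_mem_nhdsWithin
      (hYpoly.eventually_add_smul_mem_s7 hκ.1)) univ_mem] with p hp
    obtain ⟨⟨ht : 0 < p.1, hY⟩, -⟩ := hp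
    rw [inner_zero_left, mul_zero, EReal.coe_zero, sub_zero, hL0]
    refine le_of_eq_of_le ?_ (mul_le_mul_of_nonneg_left
      (coe_le_enlpPhi_sub_enlpPhi hBsym hθ hκ.2 hY (xo + p.1 • p.2))
      (EReal.coe_nonneg.2 (by positivity)))
    rw [← EReal.coe_mul, EReal.coe_eq_coe_iff, real_inner_smul_right, inner_sub_right,
      zero_apply, mul_zero, sub_zero]
    field_simp
    ring
  refine le_of_eq_of_le ?_ (liminf_le_liminf hbound)
  rw [(EReal.tendsto_coe.2 hlim).liminf_eq, EReal.coe_eq_coe_iff]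
  ring

theorem secondSubderiv_lower_estimate_general {n m : ℕ} (Y : Set (Evec m)) (hYpoly : IsPolyhedral Y)
    (B : Evec m →L[ℝ] Evec m) (hBsym : ∀ u v : Evec m, ⟪B u, v⟫ = ⟪u, B v⟫)
    (hBpsd : ∀ u : Evec m, 0 ≤ ⟪u, B u⟫)
    (φ₀ : Evec n → ℝ) (hφ₀ : ContDiff ℝ 2 φ₀)
    (Φ : Evec n → Evec m) (hΦ : ContDiff ℝ 2 Φ)
    (xo : Evec n) (lmo : Evec m)
    (hkkt1 : gradient (fun x => Lag B φ₀ Φ x lmo) xo = 0)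
    (hkkt2 : lmo ∈ subdiff (thetaY Y B) (Φ xo)) :
    ∀ w : Evec n,
      ((⟪hessL B φ₀ Φ xo lmo w, w⟫ : ℝ) : EReal) +
          2 * thetaY (critCone Y B (Φ xo) lmo) B (fderiv ℝ Φ xo w) ≤
        secondSubderiv (enlpPhi Y B φ₀ Φ) xo 0 w := by
  intro w
  have hL : ContDiff ℝ 2 fun x => Lag B φ₀ Φ x lmo :=
    (hφ₀.add (hΦ.inner ℝ contDiff_const)).sub contDiff_const
  have hL0 : fderiv ℝ (fun x => Lag B φ₀ Φ x lmo) xo = 0 :=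
    (toDual ℝ (Evec n)).symm.map_eq_zero_iff.1 hkkt1
  rw [hessL, inner_fderiv_gradient_apply]
  exact EReal.coe_add_two_mul_biSup_le fun κ hκ =>
    coe_le_secondSubderiv_of_mem_critCone hYpoly hBsym (thetaY_le_of_mem_subdiff hBsym hBpsd hkkt2)
      hL hL0 (hΦ.differentiable two_ne_zero xo) hκ w

/-- Lower estimate for the second subderivative of the essential objective of the ENLP. -/
theorem secondSubderiv_lower_estimate {n m : ℕ} (Y : Set (Evec m)) (hYne : Y.Nonempty) (hYpoly : IsPolyhedral Y)
    (B : Evec m →L[ℝ] Evec m) (hBsym : ∀ u v : Evec m, ⟪B u, v⟫ = ⟪u, B v⟫)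
    (hBpsd : ∀ u : Evec m, 0 ≤ ⟪u, B u⟫)
    (φ₀ : Evec n → ℝ) (hφ₀ : ContDiff ℝ 2 φ₀)
    (Φ : Evec n → Evec m) (hΦ : ContDiff ℝ 2 Φ)
    (xo : Evec n) (lmo : Evec m)
    (hkkt1 : gradient (fun x => Lag B φ₀ Φ x lmo) xo = 0)
    (hkkt2 : lmo ∈ subdiff (thetaY Y B) (Φ xo)) :
    ∀ w : Evec n,
      ((⟪hessL B φ₀ Φ xo lmo w, w⟫ : ℝ) : EReal) +
          2 * thetaY (critCone Y B (Φ xo) lmo) B (fderiv ℝ Φ xo w) ≤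
        secondSubderiv (enlpPhi Y B φ₀ Φ) xo 0 w :=
  secondSubderiv_lower_estimate_general Y hYpoly B hBsym hBpsd φ₀ hφ₀ Φ hΦ xo lmo hkkt1 hkkt2
end
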